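/- The homogeneous long-safe typing judgment is closed under base-type substitution: if Γ ⊢ₛ t : A is derivable using only homogeneous types, and B is a homogeneous simple type, then Γ[B] ⊢ₛ t : A[B] is derivable using only homogeneous types, where A[B] substitutes B for every occurrence of the base type o in A, provided ord is adjusted accordingly (each type C in the original derivation becomes C[B], and homogeneity of C[B] follows from homogeneity of C and B). -/
import Mathlib


/-- Simple types over a single base type `o`. -/
inductive Ty : Type
  | o : Ty
  | arr : Ty → Ty → Ty
deriving DecidableEq

/-- Order: `ord o = 0`, `ord (A → B) = max (ord A + 1) (ord B)`. -/
def Ty.ord : Ty → Nat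
  | .o => 0
  | .arr a b => max (a.ord + 1) b.ord

/-- Homogeneity: `A₁ → ... → Aₙ → o` is homogeneous when each `Aᵢ` is and
`ord A₁ ≥ ... ≥ ord Aₙ`. -/
def Ty.Homog : Ty → Prop
  | .o => True
  | .arr A B => A.Homog ∧ B.Homog ∧ ∀ C D, B = .arr C D → C.ord ≤ A.ord

/-- `A₁ → ... → Aₙ → B`. -/
def mkArr (As : List Ty) (B : Ty) : Ty := As.foldr Ty.arr B

/-- Base-type substitution `A[B]`: replace every occurrence of `o` in `A`
by `B`. -/
def Ty.substO : Ty → Ty → Ty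
  | .o, B => B
  | .arr C D, B => .arr (C.substO B) (D.substO B)

/-- Curry-style λ-terms with named variables. -/
inductive NTm : Type
  | var : Nat → NTm
  | lam : Nat → NTm → NTm
  | app : NTm → NTm → NTm
deriving DecidableEq

/-- `t u₁ ... uₙ`. -/
def appN (t : NTm) (us : List NTm) : NTm := us.foldl NTm.app t

/-- `λx₁...xₙ. t`. -/
def lamN (xs : List Nat) (t : NTm) : NTm := xs.foldr NTm.lam t

/-- The homogeneous long-safe typing judgment `Θ ⊢ₛ t : A` (Curry style):
the long-safe rules of Blum and Ong, where all types occurring in the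
derivation are required to be homogeneous. -/
inductive HLS : List (Nat × Ty) → NTm → Ty → Prop
  | var (x : Nat) (A : Ty) : A.Homog → HLS [(x, A)] (.var x) A
  | weak {Θ : List (Nat × Ty)} {t : NTm} {A : Ty} (Θ' : List (Nat × Ty)) :
      HLS Θ t A → (∀ p ∈ Θ, p ∈ Θ') → (∀ p ∈ Θ', (p.2 : Ty).Homog) → HLS Θ' t A
  | app {Θ : List (Nat × Ty)} {t : NTm} {As : List Ty} {B : Ty} {us : List NTm} :
      HLS Θ t (mkArr As B) → As.length = us.length →
      (∀ (i : Nat) (hA : i < As.length) (hu : i < us.length), HLS Θ us[i] As[i]) →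
      (∀ p ∈ Θ, B.ord ≤ (p.2 : Ty).ord) → (mkArr As B).Homog →
      HLS Θ (appN t us) B
  | abs {Θ : List (Nat × Ty)} {xs : List Nat} {As : List Ty} {B : Ty} {t : NTm} :
      xs.length = As.length → HLS (Θ ++ xs.zip As) t B →
      (∀ p ∈ Θ, (mkArr As B).ord ≤ (p.2 : Ty).ord) → (mkArr As B).Homog →
      HLS Θ (lamN xs t) (mkArr As B)

lemma ord_substO (C B : Ty) : (C.substO B).ord = C.ord + B.ord := by
  induction C with
  | o => simp [Ty.substO, Ty.ord]
  | arr a b iha ihb =>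
    simp [Ty.substO, Ty.ord, iha, ihb]
    omega

lemma homog_substO {C B : Ty} (hC : C.Homog) (hB : B.Homog) :
    (C.substO B).Homog := by
  induction C with
  | o => exact hB
  | arr a d iha ihd =>
    obtain ⟨ha, hd, hcd⟩ := hC
    refine ⟨iha ha, ihd hd, ?_⟩
    intro C' D' hE
    cases d with
    | o =>
      simp [Ty.substO] at hE
      subst hE
      rw [ord_substO]
      simp [Ty.ord]
      omega
    | arr c0 d0 =>
      simp [Ty.substO] at hE
      rw [ord_substO, ← hE.1, ord_substO]
      have := hcd c0 d0 rfl
      omega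

lemma substO_mkArr (As : List Ty) (C B : Ty) :
    (mkArr As C).substO B = mkArr (As.map (·.substO B)) (C.substO B) := by
  induction As with
  | nil => rfl
  | cons a as ih => simp [mkArr, Ty.substO] at *; exact ih

/-- the homogeneous long-safe typing judgment is closed under
base-type substitution: if `Θ ⊢ₛ t : A` (with only homogeneous types) and `B`
is homogeneous, then `Θ[B] ⊢ₛ t : A[B]`. -/
theorem hls_substO {Θ : List (Nat × Ty)} {t : NTm} {A : Ty} (B : Ty)
    (hB : B.Homog) (h : HLS Θ t A) :
    HLS (Θ.map fun p => (p.1, p.2.substO B)) t (A.substO B) := by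
  induction h with
  | var x A hA => exact HLS.var x _ (homog_substO hA hB)
  | weak Θ' h hsub hhom ih =>
    refine HLS.weak _ ih ?_ ?_
    · intro p hp
      simp only [List.mem_map] at hp ⊢
      obtain ⟨q, hq, rfl⟩ := hp
      exact ⟨q, hsub q hq, rfl⟩
    · intro p hp
      simp only [List.mem_map] at hp
      obtain ⟨q, hq, rfl⟩ := hp
      exact homog_substO (hhom q hq) hB
  | @app Θ t As C us ht hlen hus hord hhom iht ihus =>
    have h1 : (mkArr As C).substO B = mkArr (As.map (·.substO B)) (C.substO B) :=
      substO_mkArr As C B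
    refine HLS.app (h1 ▸ iht) (by simpa using hlen) ?_ ?_ (h1 ▸ homog_substO hhom hB)
    · intro i hA hu
      have hA' : i < As.length := by simpa using hA
      have := ihus i hA' hu
      simpa using this
    · intro p hp
      simp only [List.mem_map] at hp
      obtain ⟨q, hq, rfl⟩ := hp
      simp only [ord_substO]
      exact Nat.add_le_add_right (hord q hq) _
  | @abs Θ xs As C t hlen ht hord hhom ih =>
    have h1 : (mkArr As C).substO B = mkArr (As.map (·.substO B)) (C.substO B) :=
      substO_mkArr As C B
    rw [h1]
    refine HLS.abs (by simpa using hlen) ?_ ?_ (h1 ▸ homog_substO hhom hB)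
    · have hz : (Θ ++ xs.zip As).map (fun p => (p.1, p.2.substO B)) =
          (Θ.map fun p => (p.1, p.2.substO B)) ++ xs.zip (As.map (·.substO B)) := by
        rw [List.map_append, List.zip_map_right]
        rfl
      rw [← hz]; exact ih
    · intro p hp
      simp only [List.mem_map] at hp
      obtain ⟨q, hq, rfl⟩ := hp
      have := hord q hq
      rw [← h1, ord_substO, ord_substO]
      exact Nat.add_le_add_right this _
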